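/- Let (c, g) be a jointly Gaussian random vector in ℝ × ℝ^d with mean (μ_c, μ_g) ∈ ℝ × ℝ^d and with symmetric positive semidefinite covariance matrix Σ ∈ ℝ^{(1+d)×(1+d)} whose blocks are σ_c² (top-left scalar), Σ_{g,c} ∈ ℝ^d (the covariance between g and c) and Σ_g ∈ ℝ^{d×d} (the covariance of g). Let L ∈ ℝ^{(1+d)×(1+d)} satisfy Σ = L Lᵀ, let δ ∈ (0, 1/2], and set q = Φ⁻¹(1−δ) ≥ 0. Then for every fixed p ∈ ℝ^d, the chance constraint P(c + gᵀp ≥ 0) ≥ 1 − δ holds if and only if there exists b ∈ ℝ such that ‖Lᵀ(1,p)‖₂ ≤ b and −μ_gᵀp + q·b ≤ μ_c. -/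

import Mathlib

open Matrix MeasureTheory ProbabilityTheory
open scoped ENNReal NNReal

/-- The Euclidean norm on `ℝ^n`. -/
noncomputable def euclNorm {n : ℕ} (v : Fin n → ℝ) : ℝ := Real.sqrt (v ⬝ᵥ v)

/-- The standard Gaussian measure on `ι → ℝ` (iid standard normals). -/
noncomputable def stdGaussianPi (ι : Type*) [Fintype ι] : Measure (ι → ℝ) :=
  Measure.pi fun _ => gaussianReal 0 1

open scoped Classical in
/-- The multivariate Gaussian measure `N(μ, Σ)` on `ι → ℝ`, defined (for `Σ` positive
semidefinite) as the pushforward of iid standard normals under `z ↦ μ + √Σ z`;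
junk value `0` if `Σ` is not positive semidefinite. -/
noncomputable def multivariateGaussian {ι : Type*} [Fintype ι] [DecidableEq ι]
    (μ : ι → ℝ) (S : Matrix ι ι ℝ) : Measure (ι → ℝ) :=
  if h : S.PosSemidef then
    Measure.map (fun z => μ + ((h.1.eigenvectorUnitary : Matrix ι ι ℝ) *
      diagonal (Real.sqrt ∘ h.1.eigenvalues) * (star h.1.eigenvectorUnitary : Matrix ι ι ℝ)) *ᵥ z)
      (stdGaussianPi ι)
  else 0

/-- `Φ`, the cumulative distribution function of the standard real Gaussian `N(0,1)`. -/
noncomputable def stdGaussianCDF (x : ℝ) : ℝ := ((gaussianReal 0 1) (Set.Iic x)).toReal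

instance stdGaussianPi_prob (ι : Type*) [Fintype ι] : IsProbabilityMeasure (stdGaussianPi ι) := by
  unfold stdGaussianPi; infer_instance

lemma map_withDensity_equiv {α β : Type*} [MeasurableSpace α] [MeasurableSpace β]
    (e : α ≃ᵐ β) (μ : Measure α) {f : α → ℝ≥0∞} (hf : Measurable f) :
    Measure.map e (μ.withDensity f) = (Measure.map e μ).withDensity (f ∘ e.symm) := by
  ext s hs
  rw [Measure.map_apply e.measurable hs, withDensity_apply _ (e.measurable hs),
    withDensity_apply _ hs, setLIntegral_map hs (hf.comp e.symm.measurable) e.measurable]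
  simp

lemma withDensity_prod {α β : Type*} [MeasurableSpace α] [MeasurableSpace β]
    (μ : Measure α) (ν : Measure β) [SigmaFinite μ] [SigmaFinite ν]
    {f : α → ℝ≥0∞} {g : β → ℝ≥0∞} (hf : Measurable f) (hg : Measurable g)
    [SigmaFinite (μ.withDensity f)] [SigmaFinite (ν.withDensity g)] :
    (μ.withDensity f).prod (ν.withDensity g)
      = (μ.prod ν).withDensity (fun z => f z.1 * g z.2) := by
  apply Measure.prod_eq
  intro s t hs ht
  rw [withDensity_apply _ (hs.prod ht), withDensity_apply _ hs, withDensity_apply _ ht,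
    ← Measure.prod_restrict, lintegral_prod_mul hf.aemeasurable hg.aemeasurable]

lemma stdGaussianPi_eq (n : ℕ) :
    stdGaussianPi (Fin n)
      = (volume : Measure (Fin n → ℝ)).withDensity (fun x => ∏ i, gaussianPDF 0 1 (x i)) := by
  induction n with
  | zero =>
    have h1 : (fun x : Fin 0 → ℝ => ∏ i, gaussianPDF 0 1 (x i)) = 1 := by
      funext x; simp
    rw [h1, withDensity_one, stdGaussianPi, Measure.pi_of_empty, volume_pi,
      Measure.pi_of_empty]
  | succ n ih =>
    have hmp := (measurePreserving_piFinSuccAbove (fun _ : Fin (n + 1) => gaussianReal (0:ℝ) 1) 0).symm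
    have hvol := (volume_preserving_piFinSuccAbove (fun _ : Fin (n + 1) => ℝ) 0).symm
    have hg : gaussianReal (0:ℝ) 1 = volume.withDensity (gaussianPDF 0 1) :=
      gaussianReal_of_var_ne_zero 0 one_ne_zero
    haveI : SigmaFinite ((volume : Measure ℝ).withDensity (gaussianPDF 0 1)) := by
      rw [← hg]; infer_instance
    haveI : SigmaFinite ((volume : Measure (Fin n → ℝ)).withDensity
        (fun x => ∏ i, gaussianPDF 0 1 (x i))) := by
      rw [← ih]; exact inferInstanceAs (SigmaFinite (stdGaussianPi (Fin n)))
    have hγ : stdGaussianPi (Fin (n + 1))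
        = Measure.map (MeasurableEquiv.piFinSuccAbove (fun _ : Fin (n + 1) => ℝ) 0).symm
          ((gaussianReal 0 1).prod (stdGaussianPi (Fin n))) := hmp.map_eq.symm
    have hmeasn : Measurable (fun x : Fin n → ℝ => ∏ i, gaussianPDF 0 1 (x i)) :=
      Finset.measurable_prod _ fun i _ => (measurable_gaussianPDF 0 1).comp (measurable_pi_apply i)
    have hmapvol : Measure.map (MeasurableEquiv.piFinSuccAbove (fun _ : Fin (n + 1) => ℝ) 0).symm
        ((volume : Measure ℝ).prod (volume : Measure (Fin n → ℝ))) = volume := by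
      rw [← Measure.volume_eq_prod]; exact hvol.map_eq
    rw [hγ, hg, ih, withDensity_prod _ _ (measurable_gaussianPDF 0 1) hmeasn,
      map_withDensity_equiv (f := fun z : ℝ × (Fin n → ℝ) => gaussianPDF 0 1 z.1 * ∏ i, gaussianPDF 0 1 (z.2 i))
        _ _ (((measurable_gaussianPDF 0 1).comp measurable_fst).mul
        (hmeasn.comp measurable_snd)), hmapvol]
    congr 1
    funext x
    simp only [Function.comp_apply, MeasurableEquiv.symm_symm, MeasurableEquiv.piFinSuccAbove_apply]
    rw [Fin.prod_univ_succ]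
    congr 1

-- marginal
lemma pi_map_eval {n : ℕ} (i : Fin n) :
    Measure.map (fun x : Fin n → ℝ => x i) (stdGaussianPi (Fin n)) = gaussianReal 0 1 := by
  ext s hs
  rw [Measure.map_apply (measurable_pi_apply i) hs]
  have : (fun x : Fin n → ℝ => x i) ⁻¹' s
      = Set.univ.pi (Function.update (fun _ => Set.univ) i s) := Set.eval_preimage
  rw [this, stdGaussianPi, Measure.pi_pi]
  rw [Finset.prod_eq_single i]
  · simp
  · intro j _ hj; simp [Function.update_of_ne hj]
  · simp

-- product density formula
lemma prod_gaussianPDF {n : ℕ} (x : Fin n → ℝ) :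
    ∏ i, gaussianPDF 0 1 (x i)
      = ENNReal.ofReal ((Real.sqrt (2 * Real.pi))⁻¹ ^ n * Real.exp (-(∑ i, x i ^ 2) / 2)) := by
  have h : ∀ t : ℝ, gaussianPDF 0 1 t
      = ENNReal.ofReal ((Real.sqrt (2 * Real.pi))⁻¹ * Real.exp (-t ^ 2 / 2)) := by
    intro t
    rw [gaussianPDF, gaussianPDFReal_def]
    norm_num
  simp_rw [h]
  rw [← ENNReal.ofReal_prod_of_nonneg]
  · congr 1
    rw [Finset.prod_mul_distrib, Finset.prod_const, ← Real.exp_sum]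
    congr 1
    · simp [Finset.card_univ]
    · congr 1
      rw [← Finset.sum_div, show (∑ i, -x i ^ 2) = -∑ i, x i ^ 2 by simp, neg_div]
  · intro i _
    positivity


lemma sum_sq_eq_norm {n : ℕ} (x : EuclideanSpace ℝ (Fin n)) :
    ∑ i, (x i) ^ 2 = ‖x‖ ^ 2 := by
  rw [EuclideanSpace.norm_eq, Real.sq_sqrt (by positivity)]
  simp [sq_abs]

lemma measurable_G (n : ℕ) : Measurable (fun x : Fin n → ℝ => ∏ i, gaussianPDF 0 1 (x i)) :=
  Finset.measurable_prod _ fun i _ => (measurable_gaussianPDF 0 1).comp (measurable_pi_apply i)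

noncomputable def gaussE (n : ℕ) : Measure (EuclideanSpace ℝ (Fin n)) :=
  Measure.map ((MeasurableEquiv.toLp 2 (Fin n → ℝ)).symm).symm (stdGaussianPi (Fin n))

lemma gaussE_eq (n : ℕ) : gaussE n = (volume : Measure (EuclideanSpace ℝ (Fin n))).withDensity
    (fun y => ∏ i, gaussianPDF 0 1 (y i)) := by
  have hv : Measure.map (⇑((MeasurableEquiv.toLp 2 (Fin n → ℝ)).symm).symm)
      (volume : Measure (Fin n → ℝ)) = volume :=
    (MeasurePreserving.symm _ (EuclideanSpace.volume_preserving_symm_measurableEquiv_toLp (Fin n))).map_eq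
  rw [gaussE, stdGaussianPi_eq, map_withDensity_equiv _ _ (measurable_G n), hv]
  congr 1

lemma gaussE_map_isometry {n : ℕ}
    (f : EuclideanSpace ℝ (Fin n) ≃ₗᵢ[ℝ] EuclideanSpace ℝ (Fin n)) :
    Measure.map f (gaussE n) = gaussE n := by
  rw [gaussE_eq]
  have hG : Measurable (fun y : EuclideanSpace ℝ (Fin n) => ∏ i, gaussianPDF 0 1 (y i)) :=
    (measurable_G n).comp ((MeasurableEquiv.toLp 2 (Fin n → ℝ)).symm).measurable
  have h1 : (⇑f : EuclideanSpace ℝ (Fin n) → _) = ⇑f.toMeasurableEquiv := rfl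
  rw [h1, map_withDensity_equiv f.toMeasurableEquiv _ hG]
  have h2 : Measure.map (⇑f.toMeasurableEquiv) (volume : Measure (EuclideanSpace ℝ (Fin n)))
      = volume := f.measurePreserving.map_eq
  rw [h2]
  congr 1
  funext y
  show (∏ i, gaussianPDF 0 1 ((f.toMeasurableEquiv.symm y) i)) = ∏ i, gaussianPDF 0 1 (y i)
  have : (f.toMeasurableEquiv.symm y : EuclideanSpace ℝ (Fin n)) = f.symm y := rfl
  rw [this, prod_gaussianPDF, prod_gaussianPDF]
  have hs : ∑ i, (f.symm y) i ^ 2 = ∑ i, y i ^ 2 := by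
    rw [sum_sq_eq_norm (f.symm y), sum_sq_eq_norm y, f.symm.norm_map]
  rw [hs]

lemma map_dotProduct_unit {n : ℕ} (u : Fin n → ℝ) (hu : u ⬝ᵥ u = 1) :
    Measure.map (fun z => u ⬝ᵥ z) (stdGaussianPi (Fin n)) = gaussianReal 0 1 := by
  have hu0 : u ≠ 0 := by
    intro h; rw [h] at hu; simp [dotProduct] at hu
  obtain ⟨i0, hi0⟩ : ∃ i, u i ≠ 0 := by
    by_contra h; push_neg at h; exact hu0 (funext h)
  set u' : EuclideanSpace ℝ (Fin n) := (WithLp.equiv 2 _).symm u with hu'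
  have hnorm : ‖u'‖ = 1 := by
    have h2 : ‖u'‖ ^ 2 = 1 := by
      rw [← sum_sq_eq_norm]
      have : ∀ i, u' i = u i := fun i => rfl
      simp_rw [this]
      rw [← hu, dotProduct]
      exact Finset.sum_congr rfl fun i _ => (sq (u i)).symm ▸ (pow_two (u i))
    nlinarith [norm_nonneg u']
  have horth : Orthonormal ℝ (({i0} : Set (Fin n)).restrict (fun _ => u')) := by
    constructor
    · intro i; exact hnorm
    · intro i j hij; exact absurd (Subsingleton.elim i j) hij
  obtain ⟨b, hb⟩ := horth.exists_orthonormalBasis_extension_of_card_eq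
    (by simp [finrank_euclideanSpace_fin])
  have hbu : b i0 = u' := hb i0 rfl
  set e := (MeasurableEquiv.toLp 2 (Fin n → ℝ)).symm
  set f := b.repr
  have hfun : (fun z : Fin n → ℝ => u ⬝ᵥ z)
      = (fun y : EuclideanSpace ℝ (Fin n) => y i0) ∘ ⇑f ∘ ⇑e.symm := by
    funext z
    show u ⬝ᵥ z = (b.repr (e.symm z)) i0
    rw [b.repr_apply_apply, hbu]
    simp only [PiLp.inner_apply, RCLike.inner_apply, conj_trivial]
    exact Finset.sum_congr rfl fun i _ => mul_comm _ _
  have hmf : Measurable (⇑f : EuclideanSpace ℝ (Fin n) → EuclideanSpace ℝ (Fin n)) :=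
    f.continuous.measurable
  have hme : Measurable (fun y : EuclideanSpace ℝ (Fin n) => y i0) :=
    (measurable_pi_apply i0).comp e.measurable
  rw [hfun]
  calc Measure.map ((fun y : EuclideanSpace ℝ (Fin n) => y i0) ∘ (⇑f ∘ ⇑e.symm))
        (stdGaussianPi (Fin n))
      = Measure.map (fun y : EuclideanSpace ℝ (Fin n) => y i0)
          (Measure.map (⇑f ∘ ⇑e.symm) (stdGaussianPi (Fin n))) :=
        (Measure.map_map hme (hmf.comp e.symm.measurable)).symm
    _ = Measure.map (fun y : EuclideanSpace ℝ (Fin n) => y i0)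
          (Measure.map ⇑f (gaussE n)) := by
        rw [← Measure.map_map hmf e.symm.measurable, gaussE]
    _ = Measure.map (fun y : EuclideanSpace ℝ (Fin n) => y i0) (gaussE n) := by
        rw [gaussE_map_isometry f]
    _ = Measure.map ((fun y : EuclideanSpace ℝ (Fin n) => y i0) ∘ ⇑e.symm)
          (stdGaussianPi (Fin n)) := by
        rw [gaussE, Measure.map_map hme e.symm.measurable]
    _ = gaussianReal 0 1 := pi_map_eval i0

lemma map_dotProduct {n : ℕ} (v : Fin n → ℝ) :
    Measure.map (fun z => v ⬝ᵥ z) (stdGaussianPi (Fin n))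
      = gaussianReal 0 (Real.toNNReal (v ⬝ᵥ v)) := by
  by_cases hv : v = 0
  · subst hv
    have : (fun z : Fin n → ℝ => (0 : Fin n → ℝ) ⬝ᵥ z) = fun _ => (0:ℝ) := by
      funext z; simp
    rw [this, Measure.map_const, measure_univ, one_smul]
    simp [gaussianReal_zero_var]
  · have hvv : 0 < v ⬝ᵥ v := by
      rcases lt_or_eq_of_le (Finset.sum_nonneg fun i _ => mul_self_nonneg (v i) : (0:ℝ) ≤ v ⬝ᵥ v) with h | h
      · exact h
      · exact absurd ((dotProduct_self_eq_zero).mp h.symm) hv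
    set r := Real.sqrt (v ⬝ᵥ v) with hr
    have hrpos : 0 < r := Real.sqrt_pos.mpr hvv
    set u := r⁻¹ • v with hudef
    have huu : u ⬝ᵥ u = 1 := by
      rw [hudef, smul_dotProduct, dotProduct_smul, smul_eq_mul, smul_eq_mul, ← mul_assoc]
      rw [hr]
      rw [← Real.sqrt_inv]
      rw [← Real.mul_self_sqrt (by positivity : (0:ℝ) ≤ (v ⬝ᵥ v)⁻¹)]
      field_simp
      rw [Real.sq_sqrt (by positivity : (0:ℝ) ≤ √(1 / v ⬝ᵥ v) ^ 2),
        Real.sq_sqrt (by positivity : (0:ℝ) ≤ 1 / v ⬝ᵥ v), mul_one_div_cancel hvv.ne']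
    have hcomp : (fun z : Fin n → ℝ => v ⬝ᵥ z) = (fun t : ℝ => r * t) ∘ (fun z => u ⬝ᵥ z) := by
      funext z
      show v ⬝ᵥ z = r * (u ⬝ᵥ z)
      rw [hudef, smul_dotProduct, smul_eq_mul, ← mul_assoc, mul_inv_cancel₀ (ne_of_gt hrpos),
        one_mul]
    have hmu : Measurable (fun z : Fin n → ℝ => u ⬝ᵥ z) := by
      apply Finset.measurable_sum
      intro i _
      exact (measurable_pi_apply i).const_mul _
    rw [hcomp, ← Measure.map_map (measurable_const_mul r) hmu, map_dotProduct_unit u huu,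
      gaussianReal_map_const_mul r]
    congr 1
    · ring
    · ext
      simp only [NNReal.coe_mul, NNReal.coe_mk]
      rw [Real.coe_toNNReal _ (le_of_lt hvv), Real.sq_sqrt (le_of_lt hvv)]
      simp

lemma gaussianReal_neg_invariant (V : ℝ≥0) :
    Measure.map (fun t : ℝ => -t) (gaussianReal 0 V) = gaussianReal 0 V := by
  rw [show (fun t : ℝ => -t) = (fun t : ℝ => (-1 : ℝ) * t) from funext fun t =>
    (neg_one_mul t).symm, gaussianReal_map_const_mul (-1 : ℝ)]
  congr 1
  · ring
  · ext; norm_num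

lemma gaussianReal_Ici (V : ℝ≥0) (m : ℝ) :
    gaussianReal 0 V (Set.Ici (-m)) = gaussianReal 0 V (Set.Iic m) := by
  conv_lhs => rw [← gaussianReal_neg_invariant V]
  rw [Measure.map_apply measurable_neg measurableSet_Ici]
  congr 1
  ext t
  simp [neg_le_neg_iff]

lemma gaussianReal_Iic_scale (V : ℝ≥0) (hV : V ≠ 0) (m : ℝ) :
    gaussianReal 0 V (Set.Iic m)
      = ENNReal.ofReal (stdGaussianCDF (m / Real.sqrt (V : ℝ))) := by
  set σ : ℝ := Real.sqrt (V : ℝ) with hσdef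
  have hVpos : (0 : ℝ) < V := by positivity
  have hσ : 0 < σ := Real.sqrt_pos.mpr hVpos
  have hmap : Measure.map (fun t : ℝ => σ * t) (gaussianReal 0 1) = gaussianReal 0 V := by
    rw [gaussianReal_map_const_mul σ]
    congr 1
    · ring
    · ext
      simp [Real.sq_sqrt (le_of_lt hVpos)]
      rw [hσdef, Real.sq_sqrt (le_of_lt hVpos)]
  rw [← hmap, Measure.map_apply (measurable_const_mul σ) measurableSet_Iic]
  have hpre : (fun t : ℝ => σ * t) ⁻¹' Set.Iic m = Set.Iic (m / σ) := by
    ext t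
    simp only [Set.mem_preimage, Set.mem_Iic]
    rw [mul_comm]
    exact ⟨fun h => (le_div_iff₀ hσ).mpr h, fun h => (le_div_iff₀ hσ).mp h⟩
  rw [hpre, stdGaussianCDF, ENNReal.ofReal_toReal (measure_ne_top _ _)]

lemma stdGaussianCDF_strictMono : StrictMono stdGaussianCDF := by
  intro x y hxy
  have hunion : Set.Iic x ∪ Set.Ioc x y = Set.Iic y := Set.Iic_union_Ioc_eq_Iic hxy.le
  have hdisj : Disjoint (Set.Iic x) (Set.Ioc x y) := Set.Iic_disjoint_Ioc le_rfl
  have hpos : 0 < gaussianReal (0 : ℝ) 1 (Set.Ioc x y) := by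
    rw [gaussianReal_of_var_ne_zero 0 one_ne_zero, pos_iff_ne_zero]
    intro h0
    rw [withDensity_apply_eq_zero (measurable_gaussianPDF 0 1)] at h0
    have hall : {t : ℝ | gaussianPDF 0 1 t ≠ 0} = Set.univ := by
      ext t
      simp [ne_of_gt (gaussianPDF_pos 0 one_ne_zero t)]
    rw [hall, Set.univ_inter, Real.volume_Ioc] at h0
    rw [ENNReal.ofReal_eq_zero] at h0
    linarith
  unfold stdGaussianCDF
  rw [← hunion, measure_union hdisj measurableSet_Ioc,
    ENNReal.toReal_add (measure_ne_top _ _) (measure_ne_top _ _)]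
  have ht : 0 < (gaussianReal (0 : ℝ) 1 (Set.Ioc x y)).toReal :=
    ENNReal.toReal_pos (ne_of_gt hpos) (measure_ne_top _ _)
  linarith

lemma stdGaussianCDF_zero : stdGaussianCDF 0 = 1 / 2 := by
  have hsing : gaussianReal (0 : ℝ) 1 ({0} : Set ℝ) = 0 := by
    have habs : gaussianReal (0 : ℝ) 1 ≪ (volume : Measure ℝ) :=
      gaussianReal_absolutelyContinuous 0 one_ne_zero
    exact habs Real.volume_singleton
  have hIci : gaussianReal (0 : ℝ) 1 (Set.Ici 0) = gaussianReal 0 1 (Set.Ioi 0) := by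
    apply le_antisymm
    · rw [← Set.Ioi_union_left]
      calc gaussianReal (0 : ℝ) 1 (Set.Ioi 0 ∪ {0})
          ≤ gaussianReal 0 1 (Set.Ioi 0) + gaussianReal 0 1 {0} := measure_union_le _ _
        _ = gaussianReal 0 1 (Set.Ioi 0) := by rw [hsing, add_zero]
    · exact measure_mono Set.Ioi_subset_Ici_self
  have hsym : gaussianReal (0 : ℝ) 1 (Set.Iic 0) = gaussianReal 0 1 (Set.Ici 0) := by
    have := gaussianReal_Ici 1 (0 : ℝ)
    rw [neg_zero] at this
    exact this.symm
  have hcompl : gaussianReal (0 : ℝ) 1 (Set.Iic 0) + gaussianReal 0 1 (Set.Ioi 0) = 1 := by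
    have := measure_add_measure_compl (μ := gaussianReal (0 : ℝ) 1) measurableSet_Iic (s := Set.Iic 0)
    rw [Set.compl_Iic] at this
    rw [this, measure_univ]
  rw [hsym, hIci] at hcompl
  have h2 : stdGaussianCDF 0 + stdGaussianCDF 0 = 1 := by
    unfold stdGaussianCDF
    rw [hsym, hIci, ← ENNReal.toReal_add (measure_ne_top _ _) (measure_ne_top _ _), hcompl]
    rfl
  linarith

lemma stdGaussianCDF_nonneg (x : ℝ) : 0 ≤ stdGaussianCDF x := ENNReal.toReal_nonneg

lemma vecMul_self_dot {n : ℕ} (M : Matrix (Fin n) (Fin n) ℝ) (a : Fin n → ℝ) :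
    (a ᵥ* M) ⬝ᵥ (a ᵥ* M) = a ⬝ᵥ ((M * Mᵀ) *ᵥ a) := by
  symm
  rw [← Matrix.mulVec_mulVec, dotProduct_mulVec, Matrix.mulVec_transpose]

lemma measurable_dot {n : ℕ} (v : Fin n → ℝ) : Measurable (fun z : Fin n → ℝ => v ⬝ᵥ z) :=
  Finset.measurable_sum _ fun i _ => (measurable_pi_apply i).const_mul _

/-- Let `(c, g)` be jointly Gaussian in `ℝ × ℝ^d` with mean
`(μ_c, μ_g)` and symmetric positive semidefinite covariance `Σ = L Lᵀ`, let
`δ ∈ (0, 1/2]` and `q = Φ⁻¹(1−δ)`. Then for every fixed `p ∈ ℝ^d`, the chance constraint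
`P(c + gᵀp ≥ 0) ≥ 1 − δ` holds iff there exists `b ∈ ℝ` with `‖Lᵀ(1,p)‖₂ ≤ b` and
`−μ_gᵀp + q·b ≤ μ_c`. -/
theorem chance_constraint_iff_socp (d : ℕ) (muc : ℝ) (mug : Fin d → ℝ)
    (S L : Matrix (Fin (d + 1)) (Fin (d + 1)) ℝ) (hS : S.PosSemidef) (hL : S = L * Lᵀ)
    (δ : ℝ) (hδ : δ ∈ Set.Ioc (0 : ℝ) (1 / 2)) (q : ℝ) (hq : stdGaussianCDF q = 1 - δ)
    (p : Fin d → ℝ) :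
    ENNReal.ofReal (1 - δ) ≤
        multivariateGaussian (Fin.cons muc mug) S {x | 0 ≤ Fin.cons 1 p ⬝ᵥ x} ↔
      ∃ b : ℝ, euclNorm (Lᵀ *ᵥ Fin.cons 1 p) ≤ b ∧ -(mug ⬝ᵥ p) + q * b ≤ muc := by
  obtain ⟨hδ0, hδhalf⟩ := hδ
  have hq0 : 0 ≤ q := by
    by_contra h
    push_neg at h
    have hlt := stdGaussianCDF_strictMono h
    rw [hq, stdGaussianCDF_zero] at hlt
    linarith
  set a : Fin (d + 1) → ℝ := Fin.cons 1 p with ha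
  set μv : Fin (d + 1) → ℝ := Fin.cons muc mug with hμv
  set Q : Matrix (Fin (d + 1)) (Fin (d + 1)) ℝ := (hS.1.eigenvectorUnitary : Matrix _ _ ℝ) *
    diagonal (Real.sqrt ∘ hS.1.eigenvalues) * (star hS.1.eigenvectorUnitary : Matrix _ _ ℝ) with hQdef
  set w : Fin (d + 1) → ℝ := a ᵥ* Q with hw
  set m : ℝ := muc + mug ⬝ᵥ p with hm
  have hwnn : (0 : ℝ) ≤ w ⬝ᵥ w := Finset.sum_nonneg fun i _ => mul_self_nonneg _
  set r : ℝ := Real.sqrt (w ⬝ᵥ w) with hr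
  have hrnn : 0 ≤ r := Real.sqrt_nonneg _
  -- a ⬝ᵥ μv = m
  have ham : a ⬝ᵥ μv = m := by
    rw [ha, hμv, hm]
    simp [dotProduct, Fin.sum_univ_succ, mul_comm]
  -- euclNorm (Lᵀ *ᵥ a) = r
  have hQt : Qᵀ = Q := by
    have h1 : Qᴴ = Q := by
      simp [hQdef, Matrix.conjTranspose_mul, Matrix.star_eq_conjTranspose,
        Matrix.diagonal_conjTranspose, Matrix.mul_assoc]
    simpa using h1
  have hQQ : Q * Qᵀ = S := by
    rw [hQt]
    conv_rhs => rw [hS.1.spectral_theorem]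
    rw [Unitary.conjStarAlgAut_apply, hQdef]
    have hU : (star hS.1.eigenvectorUnitary : Matrix (Fin (d + 1)) (Fin (d + 1)) ℝ) *
        (hS.1.eigenvectorUnitary : Matrix (Fin (d + 1)) (Fin (d + 1)) ℝ) = 1 :=
      Unitary.coe_star_mul_self _
    have hD : diagonal (Real.sqrt ∘ hS.1.eigenvalues) * diagonal (Real.sqrt ∘ hS.1.eigenvalues)
        = diagonal (RCLike.ofReal ∘ hS.1.eigenvalues) := by
      rw [diagonal_mul_diagonal]
      congr 1
      funext i
      simp [Real.mul_self_sqrt (hS.eigenvalues_nonneg i)]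
    simp only [Matrix.mul_assoc]
    rw [← Matrix.mul_assoc (star hS.1.eigenvectorUnitary : Matrix (Fin (d + 1)) (Fin (d + 1)) ℝ),
      hU, Matrix.one_mul, ← Matrix.mul_assoc (diagonal _), hD]
  have heucl : euclNorm (Lᵀ *ᵥ a) = r := by
    rw [euclNorm, hr]
    congr 1
    rw [show Lᵀ *ᵥ a = a ᵥ* L from Matrix.mulVec_transpose L a,
      vecMul_self_dot, ← hL, hw, vecMul_self_dot, hQQ]
  -- compute the measure
  have hT : Measurable (fun z : Fin (d + 1) → ℝ => μv + Q *ᵥ z) := by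
    apply Measurable.add measurable_const
    apply measurable_pi_lambda
    intro i
    exact measurable_dot (Q i)
  have hsetm : MeasurableSet {x : Fin (d + 1) → ℝ | 0 ≤ a ⬝ᵥ x} :=
    measurableSet_le measurable_const (measurable_dot a)
  set V : ℝ≥0 := Real.toNNReal (w ⬝ᵥ w) with hV
  have hmeas : _root_.multivariateGaussian μv S {x | 0 ≤ a ⬝ᵥ x} = gaussianReal 0 V (Set.Iic m) := by
    rw [_root_.multivariateGaussian, dif_pos hS]
    rw [Measure.map_apply hT hsetm]
    have hpre : (fun z : Fin (d + 1) → ℝ => μv + Q *ᵥ z) ⁻¹' {x | 0 ≤ a ⬝ᵥ x}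
        = (fun z : Fin (d + 1) → ℝ => w ⬝ᵥ z) ⁻¹' Set.Ici (-m) := by
      ext z
      simp only [Set.mem_preimage, Set.mem_setOf_eq, Set.mem_Ici]
      rw [dotProduct_add, ham, dotProduct_mulVec, ← hw]
      constructor <;> intro h <;> linarith
    rw [hpre, ← Measure.map_apply (measurable_dot w) measurableSet_Ici,
      map_dotProduct, ← hV, gaussianReal_Ici]
  rw [hmeas]
  -- case analysis on degeneracy
  by_cases hzero : w ⬝ᵥ w = 0
  · have hV0 : V = 0 := by rw [hV, hzero]; simp
    have hr0 : r = 0 := by rw [hr, hzero, Real.sqrt_zero]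
    rw [hV0, gaussianReal_zero_var, Measure.dirac_apply' _ measurableSet_Iic]
    by_cases h0m : 0 ≤ m
    · have hind : (Set.Iic m).indicator (1 : ℝ → ℝ≥0∞) 0 = 1 := by
        rw [Set.indicator_of_mem (by simpa using h0m)]; rfl
      rw [hind]
      constructor
      · intro _
        refine ⟨r, heucl.le, ?_⟩
        rw [hr0, mul_zero]
        linarith
      · intro _
        exact ENNReal.ofReal_le_one.mpr (by linarith)
    · have hind : (Set.Iic m).indicator (1 : ℝ → ℝ≥0∞) 0 = 0 := by
        rw [Set.indicator_of_notMem (by simpa using h0m)]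
      rw [hind]
      constructor
      · intro hle
        exfalso
        have h1 : ENNReal.ofReal (1 - δ) = 0 := le_antisymm hle (by positivity)
        rw [ENNReal.ofReal_eq_zero] at h1
        linarith
      · rintro ⟨b, hb1, hb2⟩
        exfalso
        have hbr : r ≤ b := heucl ▸ hb1
        have : 0 ≤ q * b := mul_nonneg hq0 (le_trans hrnn hbr)
        push_neg at h0m
        linarith
  · have hVne : V ≠ 0 := by
      rw [hV]
      simp only [ne_eq, Real.toNNReal_eq_zero, not_le]
      exact lt_of_le_of_ne hwnn (Ne.symm hzero)
    have hVr : Real.sqrt (V : ℝ) = r := by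
      rw [hV, Real.coe_toNNReal _ hwnn, hr]
    have hrpos : 0 < r := by
      rw [hr]
      exact Real.sqrt_pos.mpr (lt_of_le_of_ne hwnn (Ne.symm hzero))
    rw [gaussianReal_Iic_scale V hVne, hVr]
    rw [ENNReal.ofReal_le_ofReal_iff (stdGaussianCDF_nonneg _)]
    rw [← hq, stdGaussianCDF_strictMono.le_iff_le, le_div_iff₀ hrpos]
    constructor
    · intro hqr
      exact ⟨r, heucl.le, by linarith⟩
    · rintro ⟨b, hb1, hb2⟩
      have hbr : r ≤ b := heucl ▸ hb1
      have : q * r ≤ q * b := mul_le_mul_of_nonneg_left hbr hq0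
      linarith
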